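/- Let x, y ∈ R^n be non-zero vectors with non-negative entries. Then x is weakly supermajorized by y (Σ_{j=1}^k x_j^↑ ≥ Σ_{j=1}^k y_j^↑ for all 1 ≤ k ≤ n) if and only if x = S y for some n×n doubly superstochastic matrix S. -/

import Mathlib

open Matrix BigOperators

/-- The standard symplectic form matrix `J = [[0, I], [-I, 0]]`. -/
def Jm (ι : Type*) [Fintype ι] [DecidableEq ι] : Matrix (ι ⊕ ι) (ι ⊕ ι) ℝ :=
  Matrix.fromBlocks 0 1 (-1) 0

/-- A real `2n × 2n` matrix is symplectic if `Mᵀ J M = J`. -/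
def IsSymplectic {ι : Type*} [Fintype ι] [DecidableEq ι]
    (M : Matrix (ι ⊕ ι) (ι ⊕ ι) ℝ) : Prop :=
  Mᵀ * Jm ι * M = Jm ι

/-- A subspace `W` of `ℝ^{2n}` is symplectic if every nonzero `u ∈ W` pairs
nontrivially via `J` with some `v ∈ W`. -/
def IsSymplecticSubspace {ι : Type*} [Fintype ι] [DecidableEq ι]
    (W : Submodule ℝ ((ι ⊕ ι) → ℝ)) : Prop :=
  ∀ u ∈ W, u ≠ 0 → ∃ v ∈ W, u ⬝ᵥ (Jm ι).mulVec v ≠ 0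

/-- `A` has symplectic kernel. -/
def HasSymplecticKernel {ι : Type*} [Fintype ι] [DecidableEq ι]
    (A : Matrix (ι ⊕ ι) (ι ⊕ ι) ℝ) : Prop :=
  IsSymplecticSubspace (LinearMap.ker A.mulVecLin)

/-- `d` is a vector of symplectic eigenvalues of `A` (Williamson diagonalization). -/
def IsSympSpectrum {ι : Type*} [Fintype ι] [DecidableEq ι]
    (A : Matrix (ι ⊕ ι) (ι ⊕ ι) ℝ) (d : ι → ℝ) : Prop :=
  ∃ M : Matrix (ι ⊕ ι) (ι ⊕ ι) ℝ, IsSymplectic M ∧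
    Mᵀ * A * M = Matrix.fromBlocks (Matrix.diagonal d) 0 0 (Matrix.diagonal d)

/-- Doubly stochastic matrix. -/
def DoublyStochastic {n : ℕ} (E : Matrix (Fin n) (Fin n) ℝ) : Prop :=
  (∀ i j, 0 ≤ E i j) ∧ (∀ i, ∑ j, E i j = 1) ∧ (∀ j, ∑ i, E i j = 1)

/-- Doubly superstochastic matrix: entrywise dominates a doubly stochastic matrix. -/
def DoublySuperstochastic {n : ℕ} (S : Matrix (Fin n) (Fin n) ℝ) : Prop :=
  ∃ E, DoublyStochastic E ∧ ∀ i j, E i j ≤ S i j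

/-- `X` lies in the convex hull of the symplectic orbit of `B`. -/
def InSympHull {ι : Type*} [Fintype ι] [DecidableEq ι]
    (B X : Matrix (ι ⊕ ι) (ι ⊕ ι) ℝ) : Prop :=
  ∃ (m : ℕ) (p : Fin m → ℝ) (M : Fin m → Matrix (ι ⊕ ι) (ι ⊕ ι) ℝ),
    (∀ i, 0 ≤ p i) ∧ (∑ i, p i = 1) ∧ (∀ i, IsSymplectic (M i)) ∧
    X = ∑ i, p i • ((M i)ᵀ * B * M i)

/-- Sum of the `k` smallest entries of `x`. -/
noncomputable def psum {n : ℕ} (x : Fin n → ℝ) (k : ℕ) : ℝ :=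
  ∑ j ∈ Finset.univ.filter (fun j : Fin n => (j : ℕ) < k), x (Tuple.sort x j)


section Aux

open Finset Pointwise

/-- the index set of the first `k` positions -/
def Fk (n k : ℕ) : Finset (Fin n) := Finset.univ.filter (fun j : Fin n => (j : ℕ) < k)

lemma Fk_card {n k : ℕ} (hk : k ≤ n) : (Fk n k).card = k := by
  have : Fk n k = (Finset.univ : Finset (Fin k)).map (Fin.castLEEmb hk) := by
    ext j
    simp only [Fk, mem_filter, mem_univ, true_and, Finset.mem_map]
    constructor
    · intro hj; exact ⟨⟨j, hj⟩, Fin.ext rfl⟩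
    · rintro ⟨i, rfl⟩; simpa using i.isLt
  rw [this, Finset.card_map]; simp

lemma Fk_succ {n k : ℕ} (hk : k < n) :
    Fk n (k + 1) = insert ⟨k, hk⟩ (Fk n k) := by
  ext j
  simp only [Fk, mem_filter, mem_univ, true_and, Finset.mem_insert]
  constructor
  · intro hj
    rcases Nat.lt_succ_iff_lt_or_eq.1 hj with h | h
    · exact Or.inr h
    · exact Or.inl (by ext; exact h)
  · rintro (rfl | h)
    · simp
    · omega

/-- prefix sums of an arbitrary tuple -/
noncomputable def pre {n : ℕ} (b : Fin n → ℝ) (k : ℕ) : ℝ := ∑ j ∈ Fk n k, b j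

lemma pre_zero {n : ℕ} (b : Fin n → ℝ) : pre b 0 = 0 := by
  simp [pre, Fk]

lemma pre_succ {n : ℕ} (b : Fin n → ℝ) {k : ℕ} (hk : k < n) :
    pre b (k + 1) = pre b k + b ⟨k, hk⟩ := by
  rw [pre, pre, Fk_succ hk, Finset.sum_insert (by simp [Fk])]
  ring

lemma psum_eq_pre {n : ℕ} (v : Fin n → ℝ) (k : ℕ) :
    psum v k = pre (fun j => v (Tuple.sort v j)) k := rfl

/-- Abel identity -/
lemma abel_id {n : ℕ} (b : Fin n → ℝ) (c : ℕ → ℝ) :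
    ∑ j : Fin n, c j * b j = ∑ k ∈ Finset.range n, c k * (pre b (k + 1) - pre b k) := by
  have h : ∀ j : Fin n, c j * b j
      = (fun k : ℕ => c k * (if h : k < n then (pre b (k+1) - pre b k) else 0)) j := by
    intro j
    simp only [j.isLt, dif_pos]
    rw [pre_succ b j.isLt]
    ring_nf
  calc ∑ j : Fin n, c j * b j
      = ∑ j : Fin n, (fun k : ℕ => c k * (if h : k < n then (pre b (k+1) - pre b k) else 0)) j := by
        exact Finset.sum_congr rfl (fun j _ => h j)
    _ = ∑ k ∈ Finset.range n, c k * (if h : k < n then (pre b (k+1) - pre b k) else 0) :=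
        Fin.sum_univ_eq_sum_range (fun k : ℕ => c k * (if h : k < n then (pre b (k+1) - pre b k) else 0)) n
    _ = ∑ k ∈ Finset.range n, c k * (pre b (k + 1) - pre b k) := by
        apply Finset.sum_congr rfl
        intro k hk
        rw [dif_pos (Finset.mem_range.1 hk)]

/-- summation by parts identity -/
lemma parts_id (c R : ℕ → ℝ) (m : ℕ) :
    ∑ k ∈ Finset.range (m + 1), c k * (R (k + 1) - R k)
      = c m * R (m + 1) + (∑ k ∈ Finset.range m, (c k - c (k + 1)) * R (k + 1)) - c 0 * R 0 := by
  induction m with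
  | zero => simp; ring
  | succ m ih =>
      rw [Finset.sum_range_succ, ih, Finset.sum_range_succ]
      ring

/-- summation by parts inequality -/
lemma parts_ineq {n : ℕ} (c P Q : ℕ → ℝ)
    (hc : ∀ k, k + 1 < n → c (k + 1) ≤ c k) (hc0 : 0 ≤ c (n - 1))
    (hPQ : ∀ k, k ≤ n → Q k ≤ P k) (h0 : P 0 = Q 0) :
    ∑ k ∈ Finset.range n, c k * (Q (k + 1) - Q k)
      ≤ ∑ k ∈ Finset.range n, c k * (P (k + 1) - P k) := by
  rcases Nat.eq_zero_or_pos n with rfl | hn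
  · simp
  obtain ⟨m, rfl⟩ := Nat.exists_eq_add_of_le hn
  set R : ℕ → ℝ := fun k => P k - Q k with hR
  have key : 0 ≤ ∑ k ∈ Finset.range (1 + m), c k * (R (k + 1) - R k) := by
    rw [Nat.add_comm 1 m, parts_id]
    have h1 : 0 ≤ c m * R (m + 1) := by
      apply mul_nonneg
      · simpa [Nat.add_sub_cancel] using hc0
      · have := hPQ (m + 1) (by omega); simp [hR]; linarith
    have h2 : 0 ≤ ∑ k ∈ Finset.range m, (c k - c (k + 1)) * R (k + 1) := by
      apply Finset.sum_nonneg
      intro k hk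
      have hk' := Finset.mem_range.1 hk
      apply mul_nonneg
      · have := hc k (by omega); linarith
      · have := hPQ (k + 1) (by omega); simp [hR]; linarith
    have h3 : c 0 * R 0 = 0 := by simp [hR, h0]
    linarith
  have expand : ∑ k ∈ Finset.range (1 + m), c k * (R (k + 1) - R k)
      = (∑ k ∈ Finset.range (1 + m), c k * (P (k + 1) - P k))
        - ∑ k ∈ Finset.range (1 + m), c k * (Q (k + 1) - Q k) := by
    rw [← Finset.sum_sub_distrib]
    apply Finset.sum_congr rfl
    intro k _
    simp [hR]; ring
  linarith [key, expand.symm.le]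

/-- the sum of a monotone tuple over the first `k` indices is minimal among `k`-subsets -/
lemma monotone_prefix_min {n : ℕ} {u : Fin n → ℝ} (hu : Monotone u)
    {k : ℕ} {B : Finset (Fin n)} (hB : B.card = k) :
    ∑ j ∈ Fk n k, u j ≤ ∑ j ∈ B, u j := by
  have hkn : k ≤ n := by
    rw [← hB]; simpa using Finset.card_le_card (Finset.subset_univ B)
  rcases Nat.eq_zero_or_pos k with rfl | hk1
  · rw [Finset.card_eq_zero.1 hB]
    simp [Fk]
  set t : Fin n := ⟨k - 1, by omega⟩ with ht
  have hcard : (Fk n k \ B).card = (B \ Fk n k).card :=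
    Finset.card_sdiff_comm (by rw [hB, Fk_card hkn])
  have h1 : ∑ j ∈ Fk n k \ B, u j ≤ (Fk n k \ B).card • u t := by
    apply Finset.sum_le_card_nsmul
    intro j hj
    apply hu
    have : (j : ℕ) < k := (Finset.mem_filter.1 (Finset.mem_sdiff.1 hj).1).2
    rw [Fin.le_def, ht]
    simp only [Fin.val_mk]
    omega
  have h2 : (B \ Fk n k).card • u t ≤ ∑ j ∈ B \ Fk n k, u j := by
    apply Finset.card_nsmul_le_sum
    intro j hj
    apply hu
    have : ¬ (j : ℕ) < k := by
      intro h
      exact (Finset.mem_sdiff.1 hj).2 (Finset.mem_filter.2 ⟨Finset.mem_univ _, h⟩)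
    rw [Fin.le_def, ht]
    simp only [Fin.val_mk]
    omega
  have e1 : ∑ j ∈ Fk n k ∩ B, u j + ∑ j ∈ Fk n k \ B, u j = ∑ j ∈ Fk n k, u j :=
    Finset.sum_inter_add_sum_sdiff _ _ _
  have e2 : ∑ j ∈ B ∩ Fk n k, u j + ∑ j ∈ B \ Fk n k, u j = ∑ j ∈ B, u j :=
    Finset.sum_inter_add_sum_sdiff _ _ _
  have e3 : Fk n k ∩ B = B ∩ Fk n k := Finset.inter_comm _ _
  rw [hcard] at h1
  rw [e3] at e1
  linarith

/-- `psum v k` is attained by the image of `Fk` under the sorting permutation -/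
lemma psum_eq_sum_sortSet {n : ℕ} (v : Fin n → ℝ) (k : ℕ) :
    psum v k = ∑ i ∈ (Fk n k).map (Tuple.sort v).toEmbedding, v i := by
  rw [Finset.sum_map]
  rfl

lemma sortSet_card {n : ℕ} (v : Fin n → ℝ) {k : ℕ} (hk : k ≤ n) :
    ((Fk n k).map (Tuple.sort v).toEmbedding).card = k := by
  rw [Finset.card_map, Fk_card hk]

/-- `psum v k` is a lower bound for sums over `k`-subsets -/
lemma psum_le_sum {n : ℕ} (v : Fin n → ℝ) {k : ℕ} {B : Finset (Fin n)}
    (hB : B.card = k) : psum v k ≤ ∑ i ∈ B, v i := by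
  have hmono : Monotone (fun j => v (Tuple.sort v j)) := Tuple.monotone_sort v
  have h : ∑ i ∈ B, v i = ∑ j ∈ B.map (Tuple.sort v).symm.toEmbedding,
      v (Tuple.sort v j) := by
    rw [Finset.sum_map]
    apply Finset.sum_congr rfl
    intro i _
    simp
  rw [h]
  exact monotone_prefix_min hmono (by rw [Finset.card_map, hB])

/-- monotonicity of `psum` under the entrywise order -/
lemma psum_mono {n : ℕ} {u v : Fin n → ℝ} (h : ∀ i, u i ≤ v i) {k : ℕ} (hk : k ≤ n) :
    psum u k ≤ psum v k := by
  calc psum u k ≤ ∑ i ∈ (Fk n k).map (Tuple.sort v).toEmbedding, u i :=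
        psum_le_sum u (sortSet_card v hk)
    _ ≤ ∑ i ∈ (Fk n k).map (Tuple.sort v).toEmbedding, v i :=
        Finset.sum_le_sum (fun i _ => h i)
    _ = psum v k := (psum_eq_sum_sortSet v k).symm

/-- a doubly stochastic matrix raises the partial sums of the smallest entries -/
lemma psum_ds {n : ℕ} {E : Matrix (Fin n) (Fin n) ℝ}
    (hE0 : ∀ i j, 0 ≤ E i j) (hEr : ∀ i, ∑ j, E i j = 1) (hEc : ∀ j, ∑ i, E i j = 1)
    {y : Fin n → ℝ} {k : ℕ} (hk1 : 1 ≤ k) (hkn : k ≤ n) :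
    psum y k ≤ psum (E.mulVec y) k := by
  set z := E.mulVec y with hz
  set B0 := (Fk n k).map (Tuple.sort z).toEmbedding with hB0
  set c : Fin n → ℝ := fun j => ∑ i ∈ B0, E i j with hc
  have hc0 : ∀ j, 0 ≤ c j := fun j => Finset.sum_nonneg (fun i _ => hE0 i j)
  have hc1 : ∀ j, c j ≤ 1 := by
    intro j
    calc c j ≤ ∑ i, E i j :=
          Finset.sum_le_sum_of_subset_of_nonneg (Finset.subset_univ _)
            (fun i _ _ => hE0 i j)
      _ = 1 := hEc j
  have hck : ∑ j, c j = (k : ℝ) := by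
    rw [hc]
    rw [Finset.sum_comm]
    have : ∀ i ∈ B0, ∑ j, E i j = 1 := fun i _ => hEr i
    rw [Finset.sum_congr rfl this]
    simp [show B0.card = k from sortSet_card z hkn]
  have hzc : psum z k = ∑ j, c j * y j := by
    rw [psum_eq_sum_sortSet z k, ← hB0]
    have : ∀ i ∈ B0, z i = ∑ j, E i j * y j := fun i _ => rfl
    rw [Finset.sum_congr rfl this, Finset.sum_comm]
    apply Finset.sum_congr rfl
    intro j _
    rw [hc, Finset.sum_mul]
  -- threshold
  set t : ℝ := y (Tuple.sort y ⟨k - 1, by omega⟩) with hthr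
  set B := (Fk n k).map (Tuple.sort y).toEmbedding with hB
  have hBcard : B.card = k := sortSet_card y hkn
  have hyB : ∀ j ∈ B, y j ≤ t := by
    intro j hj
    rw [hB, Finset.mem_map] at hj
    obtain ⟨j', hj', rfl⟩ := hj
    have hlt : (j' : ℕ) < k := (Finset.mem_filter.1 hj').2
    exact Tuple.monotone_sort y (by rw [Fin.le_def]; simp only [Fin.val_mk]; omega)
  have hyB' : ∀ j, j ∉ B → t ≤ y j := by
    intro j hj
    have hge : ¬ ((Tuple.sort y).symm j : ℕ) < k := by
      intro h
      apply hj
      rw [hB, Finset.mem_map]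
      exact ⟨(Tuple.sort y).symm j, Finset.mem_filter.2 ⟨Finset.mem_univ _, h⟩, by simp⟩
    have := Tuple.monotone_sort y
      (show (⟨k - 1, by omega⟩ : Fin n) ≤ (Tuple.sort y).symm j by
        rw [Fin.le_def]; simp only [Fin.val_mk]; omega)
    simpa using this
  have hsumB : ∑ j ∈ B, y j = psum y k := (psum_eq_sum_sortSet y k).symm
  have key : ∑ j, c j * (y j - t) ≥ psum y k - k * t := by
    calc ∑ j, c j * (y j - t) ≥ ∑ j ∈ B, c j * (y j - t) := by
          apply Finset.sum_le_sum_of_subset_of_nonneg (Finset.subset_univ _)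
          intro j _ hj
          exact mul_nonneg (hc0 j) (by linarith [hyB' j hj])
      _ ≥ ∑ j ∈ B, (y j - t) := by
          apply Finset.sum_le_sum
          intro j hj
          have h1 : y j - t ≤ 0 := by linarith [hyB j hj]
          calc y j - t = 1 * (y j - t) := (one_mul _).symm
            _ ≤ c j * (y j - t) := by
                exact mul_le_mul_of_nonpos_right (hc1 j) h1
      _ = psum y k - k * t := by
          rw [Finset.sum_sub_distrib, hsumB, Finset.sum_const, hBcard]
          simp [nsmul_eq_mul]
  have expand : ∑ j, c j * (y j - t) = ∑ j, c j * y j - k * t := by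
    have : ∑ j, c j * (y j - t) = ∑ j, c j * y j - (∑ j, c j) * t := by
      rw [Finset.sum_mul, ← Finset.sum_sub_distrib]
      apply Finset.sum_congr rfl
      intro j _
      ring
    rw [this, hck]
  rw [hzc]
  linarith [key, expand]

/-- the permutation matrix of `π` -/
def permMat {n : ℕ} (π : Equiv.Perm (Fin n)) : Matrix (Fin n) (Fin n) ℝ :=
  fun a b => if π a = b then 1 else 0

lemma permMat_mulVec {n : ℕ} (π : Equiv.Perm (Fin n)) (y : Fin n → ℝ) :
    (permMat π).mulVec y = y ∘ π := by
  funext a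
  simp only [Matrix.mulVec, dotProduct, permMat, Function.comp_apply]
  simp [ite_mul, Finset.sum_ite_eq]

lemma permMat_row {n : ℕ} (π : Equiv.Perm (Fin n)) (a : Fin n) :
    ∑ b, permMat π a b = 1 := by
  simp [permMat, Finset.sum_ite_eq]

lemma permMat_col {n : ℕ} (π : Equiv.Perm (Fin n)) (b : Fin n) :
    ∑ a, permMat π a b = 1 := by
  have h : ∀ a : Fin n, permMat π a b = if a = π.symm b then 1 else 0 := by
    intro a
    simp only [permMat]
    by_cases hab : π a = b
    · rw [if_pos hab, if_pos (by rw [← hab]; simp)]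
    · rw [if_neg hab, if_neg (by intro h'; apply hab; rw [h']; simp)]
  rw [Finset.sum_congr rfl (fun a _ => h a)]
  simp [Finset.sum_ite_eq']

/-- membership in the permutohedron plus the nonnegative cone yields a
doubly superstochastic representation -/
lemma exists_superstochastic_of_mem {n : ℕ} (x y : Fin n → ℝ) (hy0 : y ≠ 0)
    (hy : ∀ i, 0 ≤ y i)
    (hmem : x ∈ convexHull ℝ (Set.range (fun π : Equiv.Perm (Fin n) => y ∘ π))
      + {v : Fin n → ℝ | ∀ i, 0 ≤ v i}) :
    ∃ S : Matrix (Fin n) (Fin n) ℝ, DoublySuperstochastic S ∧ x = S.mulVec y := by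
  rw [Set.mem_add] at hmem
  obtain ⟨u, huK, v, hvC, huv⟩ := hmem
  rw [mem_convexHull_iff_exists_fintype] at huK
  obtain ⟨ι, _, wts, z, hw0, hw1, hz, hsum⟩ := huK
  choose π hπ using fun i => (Set.mem_range.1 (hz i))
  -- the doubly stochastic part
  set E : Matrix (Fin n) (Fin n) ℝ := ∑ i, wts i • permMat (π i) with hE
  have hE0 : ∀ a b, 0 ≤ E a b := by
    intro a b
    rw [hE]
    simp only [Finset.sum_apply, Matrix.sum_apply, Matrix.smul_apply, smul_eq_mul]
    exact Finset.sum_nonneg fun i _ =>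
      mul_nonneg (hw0 i) (by simp [permMat]; positivity)
  have hErow : ∀ a, ∑ b, E a b = 1 := by
    intro a
    rw [hE]
    simp only [Matrix.sum_apply, Matrix.smul_apply, smul_eq_mul]
    rw [Finset.sum_comm]
    calc ∑ i, ∑ b, wts i * permMat (π i) a b
        = ∑ i, wts i * ∑ b, permMat (π i) a b := by
          simp [Finset.mul_sum]
      _ = 1 := by simp [permMat_row, hw1]
  have hEcol : ∀ b, ∑ a, E a b = 1 := by
    intro b
    rw [hE]
    simp only [Matrix.sum_apply, Matrix.smul_apply, smul_eq_mul]
    rw [Finset.sum_comm]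
    calc ∑ i, ∑ a, wts i * permMat (π i) a b
        = ∑ i, wts i * ∑ a, permMat (π i) a b := by
          simp [Finset.mul_sum]
      _ = 1 := by simp [permMat_col, hw1]
  have hEy : E.mulVec y = u := by
    rw [hE, ← hsum]
    funext a
    simp only [Matrix.mulVec, dotProduct, Matrix.sum_apply, Matrix.smul_apply,
      smul_eq_mul, Finset.sum_apply, Pi.smul_apply]
    calc ∑ b, (∑ i, wts i * permMat (π i) a b) * y b
        = ∑ b, ∑ i, wts i * (permMat (π i) a b * y b) := by
          apply Finset.sum_congr rfl
          intro b _
          rw [Finset.sum_mul]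
          apply Finset.sum_congr rfl
          intro i _
          ring
      _ = ∑ i, ∑ b, wts i * (permMat (π i) a b * y b) := Finset.sum_comm
      _ = ∑ i, wts i * z i a := by
          apply Finset.sum_congr rfl
          intro i _
          rw [← Finset.mul_sum]
          congr 1
          have h := congrFun (permMat_mulVec (π i) y) a
          simp only [Matrix.mulVec, dotProduct, Function.comp_apply] at h
          rw [h, ← hπ i]
          rfl
  -- the correction part
  obtain ⟨j0, hj0⟩ := Function.ne_iff.1 hy0
  have hyj0 : 0 < y j0 := lt_of_le_of_ne (hy j0) (by simpa [eq_comm] using hj0)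
  set N : Matrix (Fin n) (Fin n) ℝ := fun a b => if b = j0 then v a / y j0 else 0 with hN
  have hNy : N.mulVec y = v := by
    funext a
    simp only [Matrix.mulVec, dotProduct, hN]
    have h : ∀ b : Fin n, (if b = j0 then v a / y j0 else 0) * y b
        = if b = j0 then v a / y j0 * y b else 0 := by
      intro b; split <;> simp
    rw [Finset.sum_congr rfl (fun b _ => h b), Finset.sum_ite_eq' univ j0]
    simp [div_mul_cancel₀, ne_of_gt hyj0]
  refine ⟨E + N, ⟨E, ⟨hE0, hErow, hEcol⟩, ?_⟩, ?_⟩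
  · intro a b
    have : 0 ≤ N a b := by
      rw [hN]
      dsimp only
      split
      · exact div_nonneg (hvC a) (le_of_lt hyj0)
      · exact le_rfl
    have h2 : (E + N) a b = E a b + N a b := rfl
    rw [h2]
    linarith
  · rw [Matrix.add_mulVec, hEy, hNy, huv]

lemma psum_zero {n : ℕ} (v : Fin n → ℝ) : psum v 0 = 0 := by
  simp [psum]

/-- key combinatorial inequality: for nonnegative `w` there is a permutation `π`
with `∑ i, w i * y (π i) ≤ ∑ i, w i * x i`, given weak supermajorization. -/
lemma exists_perm_pairing {n : ℕ} (x y w : Fin n → ℝ) (hn : 0 < n)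
    (hw : ∀ i, 0 ≤ w i)
    (hmaj : ∀ k : ℕ, 1 ≤ k → k ≤ n → psum y k ≤ psum x k) :
    ∃ π : Equiv.Perm (Fin n), ∑ i, w i * y (π i) ≤ ∑ i, w i * x i := by
  set σw := Tuple.sort w with hσw
  set σy := Tuple.sort y with hσy
  set σx := Tuple.sort x with hσx
  set c : ℕ → ℝ := fun k => if h : k < n then w (σw ((⟨k, h⟩ : Fin n).rev)) else 0 with hc
  have hcval : ∀ j : Fin n, c (j : ℕ) = w (σw j.rev) := by
    intro j
    simp only [hc, j.isLt, dif_pos]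
  have hcmono : ∀ k, k + 1 < n → c (k + 1) ≤ c k := by
    intro k hk
    have hk' : k < n := by omega
    simp only [hc, dif_pos hk, dif_pos hk']
    apply Tuple.monotone_sort w
    rw [Fin.rev_le_rev]
    exact Fin.mk_le_mk.2 (by omega)
  have hc0 : 0 ≤ c (n - 1) := by
    simp only [hc, dif_pos (by omega : n - 1 < n)]
    exact hw _
  have hmaj' : ∀ k, k ≤ n → psum y k ≤ psum x k := by
    intro k hk
    rcases Nat.eq_zero_or_pos k with rfl | h
    · rw [psum_zero, psum_zero]
    · exact hmaj k h hk
  -- the permutation pairing small w with large y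
  refine ⟨(σw.symm.trans Fin.revPerm).trans σy, ?_⟩
  have step1 : ∑ i, w i * y (((σw.symm.trans Fin.revPerm).trans σy) i)
      = ∑ j : Fin n, c (j : ℕ) * y (σy j) := by
    rw [← Equiv.sum_comp σw (fun i => w i * y (((σw.symm.trans Fin.revPerm).trans σy) i))]
    rw [← Equiv.sum_comp Fin.revPerm
      (fun j => w (σw j) * y (((σw.symm.trans Fin.revPerm).trans σy) (σw j)))]
    apply Finset.sum_congr rfl
    intro j _
    rw [hcval j]
    simp [Fin.rev_rev]
  have step6 : ∑ i, w i * x i = ∑ j : Fin n, c (j : ℕ) * x (σw (Fin.rev j)) := by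
    rw [← Equiv.sum_comp (Fin.revPerm.trans σw) (fun i => w i * x i)]
    apply Finset.sum_congr rfl
    intro j _
    rw [hcval j]
    rfl
  -- Abel rewrites
  have habel1 : ∑ j : Fin n, c (j : ℕ) * y (σy j)
      = ∑ k ∈ Finset.range n, c k * (psum y (k+1) - psum y k) := by
    exact abel_id (fun j => y (σy j)) c
  have habel2 : ∑ j : Fin n, c (j : ℕ) * x (σx j)
      = ∑ k ∈ Finset.range n, c k * (psum x (k+1) - psum x k) :=
    abel_id (fun j => x (σx j)) c
  have habel3 : ∑ j : Fin n, c (j : ℕ) * x (σw (Fin.rev j))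
      = ∑ k ∈ Finset.range n, c k * (pre (fun j => x (σw (Fin.rev j))) (k+1)
          - pre (fun j => x (σw (Fin.rev j))) k) :=
    abel_id (fun j => x (σw (Fin.rev j))) c
  -- inequality 1 : majorization
  have hstep2 : ∑ k ∈ Finset.range n, c k * (psum y (k+1) - psum y k)
      ≤ ∑ k ∈ Finset.range n, c k * (psum x (k+1) - psum x k) :=
    parts_ineq c (psum x) (psum y) hcmono hc0 hmaj' (by rw [psum_zero, psum_zero])
  -- inequality 2 : prefix sums of x along the w-order dominate psum x
  have hT : ∀ k, k ≤ n → psum x k ≤ pre (fun j => x (σw (Fin.rev j))) k := by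
    intro k hk
    have : pre (fun j => x (σw (Fin.rev j))) k
        = ∑ i ∈ (Fk n k).map ((Fin.revPerm.trans σw).toEmbedding), x i := by
      rw [Finset.sum_map]
      rfl
    rw [this]
    apply psum_le_sum
    rw [Finset.card_map, Fk_card hk]
  have hstep4 : ∑ k ∈ Finset.range n, c k * (psum x (k+1) - psum x k)
      ≤ ∑ k ∈ Finset.range n, c k * (pre (fun j => x (σw (Fin.rev j))) (k+1)
          - pre (fun j => x (σw (Fin.rev j))) k) :=
    parts_ineq c (pre (fun j => x (σw (Fin.rev j)))) (psum x) hcmono hc0 hT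
      (by rw [psum_zero]; simp [pre, Fk])
  calc ∑ i, w i * y (((σw.symm.trans Fin.revPerm).trans σy) i)
      = ∑ k ∈ Finset.range n, c k * (psum y (k+1) - psum y k) := by rw [step1, habel1]
    _ ≤ ∑ k ∈ Finset.range n, c k * (psum x (k+1) - psum x k) := hstep2
    _ ≤ ∑ k ∈ Finset.range n, c k * (pre (fun j => x (σw (Fin.rev j))) (k+1)
          - pre (fun j => x (σw (Fin.rev j))) k) := hstep4
    _ = ∑ i, w i * x i := by rw [step6, habel3]

lemma mem_hull_of_maj {n : ℕ} (x y : Fin n → ℝ) (hn : 0 < n)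
    (hmaj : ∀ k : ℕ, 1 ≤ k → k ≤ n → psum y k ≤ psum x k) :
    x ∈ convexHull ℝ (Set.range (fun π : Equiv.Perm (Fin n) => y ∘ π))
      + {v : Fin n → ℝ | ∀ i, 0 ≤ v i} := by
  set K := convexHull ℝ (Set.range (fun π : Equiv.Perm (Fin n) => y ∘ π)) with hK
  set C := {v : Fin n → ℝ | ∀ i, 0 ≤ v i} with hC
  have hCclosed : IsClosed C := by
    have : C = ⋂ i, {v : Fin n → ℝ | 0 ≤ v i} := by
      ext v; simp [hC, Set.mem_iInter]
    rw [this]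
    exact isClosed_iInter fun i => isClosed_le continuous_const (continuous_apply i)
  have hCconvex : Convex ℝ C := by
    intro v hv v' hv' a b ha hb hab
    intro i
    have : (a • v + b • v') i = a * v i + b * v' i := rfl
    rw [hC] at hv hv'
    simp only [Set.mem_setOf_eq] at hv hv'
    rw [this]
    have := hv i; have := hv' i
    positivity
  have hKcompact : IsCompact K := (Set.finite_range _).isCompact_convexHull (𝕜 := ℝ)
  have hclosed : IsClosed (K + C) := hCclosed.add_left_of_isCompact hKcompact
  have hconvex : Convex ℝ (K + C) := ((convex_convexHull ℝ _).add hCconvex)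
  by_contra hmem
  obtain ⟨f, u, hfx, hub⟩ := geometric_hahn_banach_point_closed hconvex hclosed hmem
  set w : Fin n → ℝ := fun i => f (Pi.single (M := fun _ => ℝ) i 1) with hw
  have hfw : ∀ v : Fin n → ℝ, f v = ∑ i, w i * v i := by
    intro v
    have hv : v = ∑ i, v i • Pi.single (M := fun _ => ℝ) i 1 := by
      have h1 : ∀ i, v i • Pi.single (M := fun _ => ℝ) i 1 = Pi.single i (v i) := by
        intro i
        rw [← Pi.single_smul, smul_eq_mul, mul_one]
      rw [Finset.sum_congr rfl (fun i _ => h1 i), Finset.univ_sum_single]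
    conv_lhs => rw [hv]
    rw [map_sum]
    apply Finset.sum_congr rfl
    intro i _
    rw [f.map_smul, smul_eq_mul, mul_comm (v i) _]
  have hmemyπ : ∀ π : Equiv.Perm (Fin n), (y ∘ π) ∈ K + C := by
    intro π
    rw [Set.mem_add]
    exact ⟨y ∘ π, subset_convexHull ℝ _ ⟨π, rfl⟩, 0, fun i => le_rfl, add_zero _⟩
  have hwpos : ∀ i, 0 ≤ w i := by
    intro i
    by_contra hneg
    push_neg at hneg
    set t : ℝ := (f (y ∘ Equiv.refl (Fin n)) - u + 1) / (-w i) with hts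
    have hfy : u < f (y ∘ Equiv.refl (Fin n)) := hub _ (hmemyπ (Equiv.refl (Fin n)))
    have htpos : 0 < t := div_pos (by linarith) (by linarith)
    have hmemt : (y ∘ Equiv.refl (Fin n)) + t • Pi.single (M := fun _ => ℝ) i 1 ∈ K + C := by
      rw [Set.mem_add]
      refine ⟨y ∘ Equiv.refl (Fin n), subset_convexHull ℝ _ ⟨Equiv.refl _, rfl⟩,
        t • Pi.single (M := fun _ => ℝ) i 1, ?_, rfl⟩
      intro j
      have : (t • Pi.single (M := fun _ => ℝ) i 1) j = t * Pi.single (M := fun _ => ℝ) i 1 j := rfl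
      rw [this]
      apply mul_nonneg (le_of_lt htpos)
      by_cases hij : j = i
      · subst hij; simp
      · simp [Pi.single_apply, hij]
    have := hub _ hmemt
    rw [f.map_add, f.map_smul, smul_eq_mul] at this
    have hfsingle : f (Pi.single (M := fun _ => ℝ) i 1) = w i := rfl
    rw [hfsingle] at this
    have ht : t * w i = -(f (y ∘ Equiv.refl (Fin n)) - u + 1) := by
      have hne : w i ≠ 0 := ne_of_lt hneg
      rw [hts, div_mul_eq_mul_div, mul_div_assoc,
        show w i / -w i = -1 from by rw [div_neg, div_self hne], mul_neg_one]
    rw [ht] at this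
    linarith
  obtain ⟨π, hπ⟩ := exists_perm_pairing x y w hn hwpos hmaj
  have h1 : u < f (y ∘ π) := hub _ (hmemyπ π)
  rw [hfw] at h1 hfx
  have : ∑ i, w i * (y ∘ π) i = ∑ i, w i * y (π i) := rfl
  rw [this] at h1
  linarith

end Aux

/-- For non-zero non-negative vectors, weak supermajorization `x ≺ʷ y` holds iff
`x = S y` for some doubly superstochastic `S`. -/
theorem stmt17 {n : ℕ} (x y : Fin n → ℝ)
    (hx0 : x ≠ 0) (hy0 : y ≠ 0) (hx : ∀ i, 0 ≤ x i) (hy : ∀ i, 0 ≤ y i) :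
    (∀ k : ℕ, 1 ≤ k → k ≤ n → psum y k ≤ psum x k) ↔
    ∃ S : Matrix (Fin n) (Fin n) ℝ, DoublySuperstochastic S ∧ x = S.mulVec y := by
  have hn : 0 < n := by
    rcases Nat.eq_zero_or_pos n with h | h
    · subst h
      exact absurd (funext fun i => i.elim0) hx0
    · exact h
  constructor
  · intro hmaj
    exact exists_superstochastic_of_mem x y hy0 hy (mem_hull_of_maj x y hn hmaj)
  · rintro ⟨S, ⟨E, ⟨hE0, hErow, hEcol⟩, hES⟩, hxS⟩ k hk1 hkn
    have hzx : ∀ i, E.mulVec y i ≤ x i := by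
      intro i
      rw [hxS]
      simp only [Matrix.mulVec, dotProduct]
      exact Finset.sum_le_sum (fun j _ => mul_le_mul_of_nonneg_right (hES i j) (hy j))
    calc psum y k ≤ psum (E.mulVec y) k := psum_ds hE0 hErow hEcol hk1 hkn
      _ ≤ psum x k := psum_mono hzx hkn
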